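/- Let d ≥ 4 be an integer and set ρ1 = ρ2 = ρ4 = 1, ρ3 = d−3 (the so(4,d) case). If d is even, the minimum of |1 + Σ_{j=1}^4(μ_j+ρ_j)σ_j − 2pδ| over admissible (μ,p,σ,δ) — i.e., σ_j, δ ∈ {±1}, p ∈ Z, μ ∈ Z^4 with μ_1, μ_2 ≥ |p|, μ_3 ≥ μ_4 ≥ |p|, μ_j ≡ p (mod 2), and (μ+σ, p+δ) also admissible — equals 1; if d is odd, this minimum equals 0. -/
import Mathlib

/-- Admissibility (Cartan–Helgason–Schlichtkrull, `so(4,d)` case):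
`μ₁, μ₂ ≥ |p|`, `μ₃ ≥ μ₄ ≥ |p|`, and `μⱼ ≡ p (mod 2)` for all `j`. -/
def AdmissibleSO (μ : Fin 4 → ℤ) (p : ℤ) : Prop :=
  |p| ≤ μ 0 ∧ |p| ≤ μ 1 ∧ μ 3 ≤ μ 2 ∧ |p| ≤ μ 3 ∧ ∀ j, μ j % 2 = p % 2

/-- The set of values `|1 + ∑ⱼ(μⱼ+ρⱼ)σⱼ - 2pδ|` for `ρ = (1, 1, d-3, 1)` over
admissible data with `(μ+σ, p+δ)` also admissible. -/
def SOValueSet (d : ℤ) : Set ℤ :=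
  { x : ℤ | ∃ (μ σ : Fin 4 → ℤ) (p δ : ℤ),
      (∀ j, σ j = 1 ∨ σ j = -1) ∧ (δ = 1 ∨ δ = -1) ∧
      AdmissibleSO μ p ∧ AdmissibleSO (fun j => μ j + σ j) (p + δ) ∧
      x = |1 + ((μ 0 + 1) * σ 0 + (μ 1 + 1) * σ 1
            + (μ 2 + (d - 3)) * σ 2 + (μ 3 + 1) * σ 3) - 2 * p * δ| }

lemma mem_sovalue (d M : ℤ) (hM : 0 ≤ M) (hM2 : M % 2 = 0) :
    |M + 5 - d| ∈ SOValueSet d := by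
  refine ⟨![M, 0, 2, 0], ![1, 1, -1, 1], 0, 1, ?_, Or.inl rfl, ?_, ?_, ?_⟩
  · intro j; fin_cases j <;> simp
  · refine ⟨?_, ?_, ?_, ?_, ?_⟩ <;> simp <;> try omega
    intro j; fin_cases j <;> simp <;> omega
  · refine ⟨?_, ?_, ?_, ?_, ?_⟩ <;> simp <;> try omega
    intro j; fin_cases j <;> simp <;> omega
  · simp
    congr 1
    ring

lemma sovalue_lb (d x : ℤ) (hdE : d % 2 = 0) (hx : x ∈ SOValueSet d) : 1 ≤ x := by
  obtain ⟨μ, σ, p, δ, hσ, hδ, ⟨-, -, -, -, hpar⟩, -, hxe⟩ := hx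
  have h0 := hpar 0; have h1 := hpar 1; have h2 := hpar 2; have h3 := hpar 3
  subst hxe
  rcases abs_cases (1 + ((μ 0 + 1) * σ 0 + (μ 1 + 1) * σ 1
      + (μ 2 + (d - 3)) * σ 2 + (μ 3 + 1) * σ 3) - 2 * p * δ) with ⟨h, hs⟩ | ⟨h, hs⟩ <;>
    rw [h] <;>
    rcases hσ 0 with e0 | e0 <;> rcases hσ 1 with e1 | e1 <;>
    rcases hσ 2 with e2 | e2 <;> rcases hσ 3 with e3 | e3 <;>
    rcases hδ with eδ | eδ <;>
    rw [e0, e1, e2, e3, eδ] <;> rw [e0, e1, e2, e3, eδ] at hs <;>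
    simp only [mul_one, mul_neg_one, mul_neg] <;> omega

/-- For `g = so(4,d)`, `d ≥ 4`: if `d` is even the minimum of the value set is `1`;
if `d` is odd the minimum is `0`. -/
theorem complementary_series_so4d (d : ℤ) (hd : 4 ≤ d) :
    (Even d → IsLeast (SOValueSet d) 1) ∧ (Odd d → IsLeast (SOValueSet d) 0) := by
  constructor
  · intro hE
    rw [Int.even_iff] at hE
    constructor
    · have := mem_sovalue d (d - 4) (by omega) (by omega)
      have h1 : |d - 4 + 5 - d| = (1 : ℤ) := by
        have : d - 4 + 5 - d = 1 := by ring
        rw [this]; simp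
      rwa [h1] at this
    · intro x hx
      exact sovalue_lb d x hE hx
  · intro hO
    rw [Int.odd_iff] at hO
    constructor
    · have := mem_sovalue d (d - 5) (by omega) (by omega)
      have h1 : |d - 5 + 5 - d| = (0 : ℤ) := by
        have : d - 5 + 5 - d = 0 := by ring
        rw [this]; simp
      rwa [h1] at this
    · intro x hx
      obtain ⟨μ, σ, p, δ, -, -, -, -, hxe⟩ := hx
      subst hxe
      exact abs_nonneg _
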